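/- Let R, S ≥ 1 and let p be an R×S probability matrix. Suppose that for all nonempty subsets v₁ ⊆ Fin R and v₂ ⊆ Fin S with p_{ij} = 0 for all (i,j) ∈ v₁ × v₂, one has |v₁|/R + |v₂|/S ≤ 1, and that there exists such a pair (v₁*, v₂*) with |v₁*|/R + |v₂*|/S = 1 for which p does not vanish identically on the complementary rectangle (Fin R ∖ v₁*) × (Fin S ∖ v₂*). Then: (a) there is no R×S probability matrix q with uniform margins and Supp(q) = Supp(p); (b) there exists an R×S probability matrix q with uniform margins and Supp(q) strictly contained in Supp(p). -/

import Mathlib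

open Finset

/-- If a matrix with uniform margins vanishes on a rectangle attaining equality,
it vanishes on the complementary rectangle. -/
lemma rect_zero {R S : ℕ} (hR : 0 < R) (hS : 0 < S) (q : Fin R → Fin S → ℝ)
    (hnn : ∀ i j, 0 ≤ q i j) (hrow : ∀ i, ∑ j, q i j = 1/R) (hcol : ∀ j, ∑ i, q i j = 1/S)
    (v₁ : Finset (Fin R)) (v₂ : Finset (Fin S))
    (hz : ∀ i ∈ v₁, ∀ j ∈ v₂, q i j = 0)
    (heq : (v₁.card : ℝ)/R + (v₂.card : ℝ)/S = 1) :
    ∀ i ∉ v₁, ∀ j ∉ v₂, q i j = 0 := by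
  have hRpos : (0:ℝ) < R := by exact_mod_cast hR
  have hSpos : (0:ℝ) < S := by exact_mod_cast hS
  have hA : ∑ i ∈ v₁, ∑ j ∈ v₂ᶜ, q i j = v₁.card / R := by
    have h1 : ∀ i ∈ v₁, ∑ j ∈ v₂ᶜ, q i j = 1/R := by
      intro i hi
      have h := sum_add_sum_compl v₂ (q i)
      have hz' : ∑ j ∈ v₂, q i j = 0 := sum_eq_zero (fun j hj => hz i hi j hj)
      rw [hz', zero_add] at h
      rw [h, hrow i]
    rw [sum_congr rfl h1, sum_const, nsmul_eq_mul]
    ring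
  have h3 : ∑ j, ∑ i, q i j = 1 := by
    rw [sum_congr rfl (fun j _ => hcol j), sum_const, card_univ, Fintype.card_fin,
      nsmul_eq_mul]
    field_simp
  have h2 : ∑ j ∈ v₂, ∑ i, q i j = v₂.card / S := by
    rw [sum_congr rfl (fun j _ => hcol j), sum_const, nsmul_eq_mul]; ring
  have hB : ∑ j ∈ v₂ᶜ, ∑ i, q i j = 1 - v₂.card / S := by
    have h := sum_add_sum_compl v₂ (fun j => ∑ i, q i j)
    linarith
  have hT : ∑ i ∈ v₁ᶜ, ∑ j ∈ v₂ᶜ, q i j = 0 := by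
    have hswap : ∑ j ∈ v₂ᶜ, ∑ i, q i j = ∑ i, ∑ j ∈ v₂ᶜ, q i j := Finset.sum_comm
    have hsplit := sum_add_sum_compl v₁ (fun i => ∑ j ∈ v₂ᶜ, q i j)
    linarith
  intro i hi j hj
  have h1 := (Finset.sum_eq_zero_iff_of_nonneg
    (fun i _ => Finset.sum_nonneg (fun j _ => hnn i j))).mp hT i (mem_compl.mpr hi)
  exact (Finset.sum_eq_zero_iff_of_nonneg (fun j _ => hnn i j)).mp h1 j (mem_compl.mpr hj)

/-- Feasibility: the rectangle condition gives a uniform-margin matrix supported in supp p. -/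
lemma feasible {R S : ℕ} (hR : 0 < R) (hS : 0 < S) (p : Fin R → Fin S → ℝ)
    (hpnn : ∀ i j, 0 ≤ p i j)
    (hrect : ∀ (v₁ : Finset (Fin R)) (v₂ : Finset (Fin S)), v₁.Nonempty → v₂.Nonempty →
      (∀ i ∈ v₁, ∀ j ∈ v₂, p i j = 0) →
      (v₁.card : ℝ) / R + (v₂.card : ℝ) / S ≤ 1) :
    ∃ q : Fin R → Fin S → ℝ, (∀ i j, 0 ≤ q i j) ∧ (∀ i, ∑ j, q i j = 1/R) ∧
      (∀ j, ∑ i, q i j = 1/S) ∧ (∀ i j, 0 < q i j → 0 < p i j) := by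
  classical
  have hRpos : (0:ℝ) < R := by exact_mod_cast hR
  have hSpos : (0:ℝ) < S := by exact_mod_cast hS
  set N : Fin R → Finset (Fin S) := fun i => univ.filter fun j => p i j ≠ 0 with hN
  set t : Fin R × Fin S → Finset (Fin S × Fin R) := fun x => (N x.1) ×ˢ univ with ht
  have hall : ∀ s : Finset (Fin R × Fin S), s.card ≤ (s.biUnion t).card := by
    intro s
    rcases s.eq_empty_or_nonempty with rfl | hs
    · simp
    set A := s.image Prod.fst with hAdef
    have hAne : A.Nonempty := hs.image _
    have h1 : s.card ≤ A.card * S := by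
      calc s.card ≤ (A ×ˢ (univ : Finset (Fin S))).card :=
            card_le_card (fun x hx => mem_product.mpr ⟨mem_image_of_mem _ hx, mem_univ _⟩)
        _ = A.card * S := by rw [card_product, card_univ, Fintype.card_fin]
    set B := A.biUnion N with hBdef
    have h2 : s.biUnion t = B ×ˢ (univ : Finset (Fin R)) := by
      ext y
      simp only [mem_biUnion, ht, mem_product, mem_univ, and_true]
      constructor
      · rintro ⟨x, hx, hy⟩
        exact mem_biUnion.mpr ⟨x.1, mem_image_of_mem _ hx, hy⟩
      · intro hy
        obtain ⟨i, hi, hyi⟩ := mem_biUnion.mp hy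
        obtain ⟨x, hx, rfl⟩ := mem_image.mp hi
        exact ⟨x, hx, hyi⟩
    have h3 : A.card * S ≤ B.card * R := by
      rcases (Bᶜ : Finset (Fin S)).eq_empty_or_nonempty with hBc | hBc
      · have hBu : B = univ := by
          rwa [← compl_eq_empty_iff]
        rw [hBu, card_univ, Fintype.card_fin]
        exact Nat.mul_le_mul_right S (by simpa using (card_le_univ A)) |>.trans
          (le_of_eq (Nat.mul_comm R S)) |>.trans (le_of_eq rfl)
      · have hzero : ∀ i ∈ A, ∀ j ∈ Bᶜ, p i j = 0 := by
          intro i hi j hj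
          by_contra hne
          have : j ∈ N i := by simp [hN, hne]
          have : j ∈ B := mem_biUnion.mpr ⟨i, hi, this⟩
          exact (mem_compl.mp hj) this
        have hr := hrect A Bᶜ hAne hBc hzero
        have hcard : ((Bᶜ : Finset (Fin S)).card : ℝ) = S - B.card := by
          rw [card_compl, Fintype.card_fin]
          have : B.card ≤ S := by simpa using card_le_univ B
          push_cast [Nat.cast_sub this]
          ring
        rw [hcard, div_add_div _ _ (ne_of_gt hRpos) (ne_of_gt hSpos),
          div_le_one (by positivity)] at hr
        have : (A.card : ℝ) * S ≤ B.card * R := by nlinarith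
        exact_mod_cast this
    calc s.card ≤ A.card * S := h1
      _ ≤ B.card * R := h3
      _ = (s.biUnion t).card := by rw [h2, card_product, card_univ, Fintype.card_fin]
  obtain ⟨f, hfinj, hft⟩ := (Finset.all_card_le_biUnion_card_iff_exists_injective t).mp hall
  -- f is bijective
  have hgbij : Function.Bijective (fun x => Prod.swap (f x) : Fin R × Fin S → Fin R × Fin S) :=
    Finite.injective_iff_bijective.mp (Prod.swap_injective.comp hfinj)
  have hfsurj : Function.Surjective f := by
    intro y
    obtain ⟨x, hx⟩ := hgbij.2 y.swap
    exact ⟨x, Prod.swap_injective (by simpa using hx)⟩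
  set q : Fin R → Fin S → ℝ :=
    fun i j => ((univ.filter fun c : Fin S => (f (i, c)).1 = j).card : ℝ) / (R * S) with hq
  refine ⟨q, ?_, ?_, ?_, ?_⟩
  · intro i j; positivity
  · intro i
    have hfib := Finset.card_eq_sum_card_fiberwise
      (s := (univ : Finset (Fin S))) (t := (univ : Finset (Fin S)))
      (f := fun c => (f (i, c)).1) (fun c _ => mem_univ _)
    rw [card_univ, Fintype.card_fin] at hfib
    simp only [hq]
    rw [← Finset.sum_div, ← Nat.cast_sum, ← hfib]
    rw [div_eq_div_iff (by positivity) hRpos.ne']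
    push_cast
    ring
  · intro j
    set X : Finset (Fin R × Fin S) := univ.filter fun x => (f x).1 = j with hX
    have hfib := Finset.card_eq_sum_card_fiberwise
      (s := X) (t := (univ : Finset (Fin R))) (f := Prod.fst) (fun x _ => mem_univ _)
    have hfiber : ∀ i : Fin R, (X.filter fun x => x.1 = i).card =
        (univ.filter fun c : Fin S => (f (i, c)).1 = j).card := by
      intro i
      apply Finset.card_nbij' (fun x => x.2) (fun c => (i, c))
      · intro x hx
        simp only [hX, mem_coe, mem_filter, mem_univ, true_and] at hx
        obtain ⟨h1, h2⟩ := hx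
        have : x = (i, x.2) := by rw [← h2]
        simp only [mem_coe, mem_filter, mem_univ, true_and]
        rw [← this]; exact h1
      · intro c hc
        simp only [mem_coe, mem_filter, mem_univ, true_and] at hc
        simp [hX, hc]
      · intro x hx
        simp only [hX, mem_coe, mem_filter, mem_univ, true_and] at hx
        exact Prod.ext hx.2.symm rfl
      · intro c hc; rfl
    have hXcard : X.card = R := by
      have : X.card = (univ.filter fun y : Fin S × Fin R => y.1 = j).card := by
        apply Finset.card_nbij f
        · intro x hx
          simp only [hX, mem_coe, mem_filter, mem_univ, true_and] at hx ⊢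
          exact hx
        · exact fun x _ y _ h => hfinj h
        · intro y hy
          obtain ⟨x, rfl⟩ := hfsurj y
          simp only [Set.mem_image, coe_filter, Set.mem_setOf_eq] at hy ⊢
          exact ⟨x, by simpa [hX] using hy, rfl⟩
      rw [this]
      have : (univ.filter fun y : Fin S × Fin R => y.1 = j) = {j} ×ˢ univ := by
        ext y; rw [mem_filter, mem_product]; simp
      rw [this, card_product, card_singleton, card_univ, Fintype.card_fin, one_mul]
    simp only [hq]
    rw [← Finset.sum_div, ← Nat.cast_sum]
    rw [sum_congr rfl (fun i _ => (hfiber i).symm), ← hfib, hXcard]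
    rw [div_eq_div_iff (by positivity) hSpos.ne']
    push_cast
    ring
  · intro i j hpos
    simp only [hq] at hpos
    have hcard : (univ.filter fun c : Fin S => (f (i, c)).1 = j).Nonempty := by
      by_contra h
      rw [Finset.not_nonempty_iff_eq_empty] at h
      rw [h] at hpos
      simp at hpos
    obtain ⟨c, hc⟩ := hcard
    simp only [mem_filter, mem_univ, true_and] at hc
    have := hft (i, c)
    simp only [ht, mem_product, hN, mem_filter] at this
    have hne : p i j ≠ 0 := by
      have := this.1.2
      rwa [hc] at this
    exact lt_of_le_of_ne (hpnn i j) (Ne.symm hne)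

/-- Suppose every zero rectangle `v₁ × v₂` of the probability matrix `p`
satisfies `|v₁|/R + |v₂|/S ≤ 1`, and some zero rectangle `(v₁*, v₂*)` attains equality
while `p` does not vanish identically on the complementary rectangle. Then (a) no
probability matrix with uniform margins has exactly the support of `p`, but (b) some
probability matrix with uniform margins has support strictly contained in that of `p`. -/
theorem stmt_11 (R S : ℕ) (hR : 1 ≤ R) (hS : 1 ≤ S)
    (p : Fin R → Fin S → ℝ)
    (hpnn : ∀ i j, 0 ≤ p i j) (hpsum : ∑ i, ∑ j, p i j = 1)
    (hrect : ∀ (v₁ : Finset (Fin R)) (v₂ : Finset (Fin S)), v₁.Nonempty → v₂.Nonempty →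
      (∀ i ∈ v₁, ∀ j ∈ v₂, p i j = 0) →
      (v₁.card : ℝ) / R + (v₂.card : ℝ) / S ≤ 1)
    (hstar : ∃ (v₁ : Finset (Fin R)) (v₂ : Finset (Fin S)), v₁.Nonempty ∧ v₂.Nonempty ∧
      (∀ i ∈ v₁, ∀ j ∈ v₂, p i j = 0) ∧
      (v₁.card : ℝ) / R + (v₂.card : ℝ) / S = 1 ∧
      ∃ i ∉ v₁, ∃ j ∉ v₂, p i j ≠ 0) :
    (¬ ∃ q : Fin R → Fin S → ℝ,
      (∀ i j, 0 ≤ q i j) ∧ (∑ i, ∑ j, q i j = 1) ∧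
      (∀ i, ∑ j, q i j = 1 / R) ∧ (∀ j, ∑ i, q i j = 1 / S) ∧
      (∀ i j, 0 < q i j ↔ 0 < p i j)) ∧
    (∃ q : Fin R → Fin S → ℝ,
      (∀ i j, 0 ≤ q i j) ∧ (∑ i, ∑ j, q i j = 1) ∧
      (∀ i, ∑ j, q i j = 1 / R) ∧ (∀ j, ∑ i, q i j = 1 / S) ∧
      {ij : Fin R × Fin S | 0 < q ij.1 ij.2} ⊂ {ij : Fin R × Fin S | 0 < p ij.1 ij.2}) := by
  obtain ⟨v₁, v₂, hv₁, hv₂, hzero, heqv, i₀, hi₀, j₀, hj₀, hp₀⟩ := hstar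
  have hRpos : 0 < R := hR
  have hSpos : 0 < S := hS
  have hp₀' : 0 < p i₀ j₀ := lt_of_le_of_ne (hpnn _ _) (Ne.symm hp₀)
  constructor
  · rintro ⟨q, hnn, hsum, hrow, hcol, hsupp⟩
    have hzq : ∀ i ∈ v₁, ∀ j ∈ v₂, q i j = 0 := by
      intro i hi j hj
      have h1 : ¬ 0 < q i j := fun h => by
        have h2 := (hsupp i j).mp h
        rw [hzero i hi j hj] at h2
        exact lt_irrefl _ h2
      linarith [hnn i j]
    have h3 := rect_zero hRpos hSpos q hnn hrow hcol v₁ v₂ hzq heqv i₀ hi₀ j₀ hj₀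
    have h4 := (hsupp i₀ j₀).mpr hp₀'
    linarith
  · obtain ⟨q, hnn, hrow, hcol, hsupp⟩ := feasible hRpos hSpos p hpnn hrect
    have hsum : ∑ i, ∑ j, q i j = 1 := by
      rw [Finset.sum_congr rfl (fun i _ => hrow i), sum_const, card_univ, Fintype.card_fin,
        nsmul_eq_mul]
      have : (R:ℝ) ≠ 0 := by positivity
      field_simp
    have hzq : ∀ i ∈ v₁, ∀ j ∈ v₂, q i j = 0 := by
      intro i hi j hj
      by_contra h
      have h1 : 0 < q i j := lt_of_le_of_ne (hnn i j) (Ne.symm h)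
      have h2 := hsupp i j h1
      rw [hzero i hi j hj] at h2
      exact lt_irrefl _ h2
    have hq0 := rect_zero hRpos hSpos q hnn hrow hcol v₁ v₂ hzq heqv i₀ hi₀ j₀ hj₀
    refine ⟨q, hnn, hsum, hrow, hcol, ?_⟩
    rw [Set.ssubset_iff_subset_ne]
    constructor
    · intro x hx
      exact hsupp x.1 x.2 hx
    · intro hcon
      have hmem : (i₀, j₀) ∈ {ij : Fin R × Fin S | 0 < q ij.1 ij.2} := by
        rw [hcon]
        exact hp₀'
      have : 0 < q i₀ j₀ := hmem
      linarith [hq0]
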